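/- arXiv:1407.6898 — 6 statements merged into one kernel-verified Lean document; each statement's English description precedes it below -/
import Mathlib

section
/- Let Q ∈ ℝ^{m×m} be symmetric positive definite, P ∈ ℝ^{n×n} symmetric positive semidefinite, S ∈ ℝ^{n×m}, and A ∈ ℝ^{n×n}. Define Q̂_u := S Q⁻¹ Sᵀ and B̂ := S Q⁻¹ Sᵀ. Then any K̂ ∈ ℝ^{n×n} satisfying (Q̂_u + B̂ᵀ P B̂) K̂ = −B̂ᵀ P A yields a matrix K̄ := Q⁻¹ Sᵀ K̂ ∈ ℝ^{m×n} satisfying S K̄ = B̂ K̂ and (Q + Sᵀ P S) K̄ = −Sᵀ P A holds whenever K̄ is restricted so that Q K̄ lies in the column space of Sᵀ. -/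
open Matrix

lemma conj_zero_of_posdef {m n : ℕ} {R : Matrix (Fin m) (Fin m) ℝ}
    (hR : R.PosDef) (M : Matrix (Fin m) (Fin n) ℝ) (h : Mᵀ * R * M = 0) :
    M = 0 := by
  ext i j
  have hw : (fun i => M i j) = 0 := by
    by_contra hne
    have hpos := hR.dotProduct_mulVec_pos hne
    have : (fun i => M i j) ⬝ᵥ R.mulVec (fun i => M i j) = (Mᵀ * R * M) j j := by
      simp [Matrix.mul_apply, Matrix.mulVec, dotProduct, Finset.mul_sum, Finset.sum_mul,
        mul_comm, mul_assoc, mul_left_comm]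
      rw [Finset.sum_comm]
      exact Finset.sum_congr rfl fun y _ => Finset.sum_congr rfl fun x _ => by ring
    rw [h] at this
    simp [this] at hpos
  exact congrFun hw i

theorem reduced_system_solution {n m : ℕ}
    (Q : Matrix (Fin m) (Fin m) ℝ) (hQ : Q.PosDef)
    (P : Matrix (Fin n) (Fin n) ℝ) (hP : P.PosSemidef)
    (S : Matrix (Fin n) (Fin m) ℝ) (A : Matrix (Fin n) (Fin n) ℝ)
    (Qhu Bh : Matrix (Fin n) (Fin n) ℝ)
    (hQhu : Qhu = S * Q⁻¹ * Sᵀ) (hBh : Bh = S * Q⁻¹ * Sᵀ)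
    (Kh : Matrix (Fin n) (Fin n) ℝ)
    (hKh : (Qhu + Bhᵀ * P * Bh) * Kh = -(Bhᵀ * P * A))
    (Kb : Matrix (Fin m) (Fin n) ℝ) (hKb : Kb = Q⁻¹ * Sᵀ * Kh) :
    S * Kb = Bh * Kh
      ∧ ((∀ j, (fun i => (Q * Kb) i j) ∈ LinearMap.range (Sᵀ).mulVecLin) →
          (Q + Sᵀ * P * S) * Kb = -(Sᵀ * P * A)) := by
  have hdet : IsUnit Q.det := isUnit_iff_ne_zero.2 hQ.det_pos.ne'
  have hQQi : Q * Q⁻¹ = 1 := Matrix.mul_nonsing_inv Q hdet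
  have hQsym : Qᵀ = Q := by
    have := hQ.1
    rwa [Matrix.IsHermitian, conjTranspose] at this <;> simp_all [Matrix.map_id]
  have hQisym : (Q⁻¹)ᵀ = Q⁻¹ := by
    rw [Matrix.transpose_nonsing_inv, hQsym]
  have hBhT : Bhᵀ = Bh := by
    rw [hBh]
    simp [Matrix.transpose_mul, hQisym, Matrix.mul_assoc]
  have hQiPD : (Q⁻¹).PosDef := hQ.inv
  constructor
  · rw [hKb, hBh, Matrix.mul_assoc, Matrix.mul_assoc, Matrix.mul_assoc]
  · intro _
    set X : Matrix (Fin n) (Fin n) ℝ := Kh + P * Bh * Kh + P * A with hX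
    have hBhX : Bh * X = 0 := by
      have h1 := hKh
      rw [hQhu, ← hBh, hBhT] at h1
      simp only [Matrix.add_mul, Matrix.mul_assoc] at h1
      rw [hX, Matrix.mul_add, Matrix.mul_add]
      simp only [Matrix.mul_assoc]
      rw [h1]
      abel
    have hM : Sᵀ * X = 0 := by
      apply conj_zero_of_posdef hQiPD
      have : (Sᵀ * X)ᵀ * Q⁻¹ * (Sᵀ * X) = Xᵀ * (Bh * X) := by
        rw [hBh]
        simp only [Matrix.transpose_mul, Matrix.transpose_transpose, Matrix.mul_assoc]
      rw [this, hBhX, Matrix.mul_zero]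
    have hQKb : Q * Kb = Sᵀ * Kh := by
      rw [hKb, ← Matrix.mul_assoc, ← Matrix.mul_assoc, hQQi, Matrix.one_mul]
    have hSPS : Sᵀ * P * S * Kb = Sᵀ * (P * Bh * Kh) := by
      rw [hKb, hBh]
      simp only [Matrix.mul_assoc]
    calc (Q + Sᵀ * P * S) * Kb = Q * Kb + Sᵀ * P * S * Kb := Matrix.add_mul _ _ _
      _ = Sᵀ * Kh + Sᵀ * (P * Bh * Kh) := by rw [hQKb, hSPS]
      _ = Sᵀ * X - Sᵀ * (P * A) := by rw [hX, Matrix.mul_add, Matrix.mul_add]; abel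
      _ = -(Sᵀ * P * A) := by rw [hM, Matrix.mul_assoc]; abel
end

section
/- Let Q ∈ ℝ^{m×m} be symmetric positive definite, S ∈ ℝ^{n×m}, P ∈ ℝ^{n×n} symmetric positive semidefinite, and let U₁ be an orthonormal basis of range(Sᵀ) and U₂ an orthonormal basis of its orthogonal complement. If K̄ ∈ ℝ^{m×n} satisfies (Q + SᵀPS)K̄ = −SᵀPA for some A ∈ ℝ^{n×n}, then U₂ᵀ Q K̄ = 0; equivalently, K̄ = Q⁻¹U₁Z for some Z ∈ ℝ^{n̂×n}, where n̂ = dim range(Sᵀ). -/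
open Matrix

theorem Kbar_degrees_of_freedom {n m nh : ℕ}
    (Q : Matrix (Fin m) (Fin m) ℝ) (hQ : Q.PosDef)
    (S : Matrix (Fin n) (Fin m) ℝ)
    (P : Matrix (Fin n) (Fin n) ℝ) (hP : P.PosSemidef)
    (A : Matrix (Fin n) (Fin n) ℝ)
    (U₁ : Matrix (Fin m) (Fin nh) ℝ) (U₂ : Matrix (Fin m) (Fin (m - nh)) ℝ)
    (hnh : nh = Module.finrank ℝ (LinearMap.range (Sᵀ).mulVecLin))
    (hU₁range : LinearMap.range U₁.mulVecLin = LinearMap.range (Sᵀ).mulVecLin)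
    (hU₁ : U₁ᵀ * U₁ = 1) (hU₂ : U₂ᵀ * U₂ = 1)
    (hU₂perp : S * U₂ = 0)
    (hcomplete : U₁ * U₁ᵀ + U₂ * U₂ᵀ = 1)
    (Kb : Matrix (Fin m) (Fin n) ℝ)
    (hKb : (Q + Sᵀ * P * S) * Kb = -(Sᵀ * P * A)) :
    U₂ᵀ * Q * Kb = 0 ∧ ∃ Z : Matrix (Fin nh) (Fin n) ℝ, Kb = Q⁻¹ * U₁ * Z := by
  have hU₂S : U₂ᵀ * Sᵀ = 0 := by
    have := congrArg Matrix.transpose hU₂perp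
    simpa [Matrix.transpose_mul] using this
  have hmain : U₂ᵀ * Q * Kb = 0 := by
    have h := congrArg (fun M => U₂ᵀ * M) hKb
    simp only [Matrix.mul_add, Matrix.add_mul, ← Matrix.mul_assoc] at h ⊢
    rw [Matrix.mul_neg, show U₂ᵀ * Sᵀ * P * S * Kb = 0 by
      simp [hU₂S, Matrix.zero_mul],
      show U₂ᵀ * (Sᵀ * P * A) = 0 by
        simp [← Matrix.mul_assoc, hU₂S, Matrix.zero_mul]] at h
    simpa using h
  refine ⟨hmain, ⟨U₁ᵀ * Q * Kb, ?_⟩⟩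
  have hQinv : Q⁻¹ * Q = 1 := Matrix.nonsing_inv_mul Q (isUnit_iff_ne_zero.mpr hQ.det_pos.ne')
  have hQKb : Q * Kb = U₁ * (U₁ᵀ * Q * Kb) := by
    have := congrArg (fun M => M * (Q * Kb)) hcomplete
    simp only [Matrix.add_mul, Matrix.one_mul] at this
    calc Q * Kb = U₁ * U₁ᵀ * (Q * Kb) + U₂ * U₂ᵀ * (Q * Kb) := this.symm
      _ = U₁ * (U₁ᵀ * Q * Kb) := by
          rw [Matrix.mul_assoc U₂, ← Matrix.mul_assoc U₂ᵀ, hmain]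
          simp [Matrix.mul_assoc]
  calc Kb = Q⁻¹ * Q * Kb := by rw [hQinv, Matrix.one_mul]
    _ = Q⁻¹ * U₁ * (U₁ᵀ * Q * Kb) := by rw [Matrix.mul_assoc, hQKb, ← Matrix.mul_assoc]
end

section
/- Let P_N ∈ ℝ^{n×n} be symmetric positive semidefinite, Â ∈ ℝ^{n×n}, and let Q̄ be block-diagonal with symmetric positive definite blocks G_1,…,G_N ∈ ℝ^{n_u×n_u}, and S ∈ ℝ^{n×Nn_u}. Then the optimization problem: minimize ½x₀ᵀP₀x₀ + ½ūᵀQ̄ū + ½x_NᵀP_Nx_N subject to x₀ = x̂ and x_N = Âx₀ + Sū, over (x₀, ū, x_N), has a unique minimizer in ū modulo ker(S) when P_N ⪰ 0, and its optimal value equals ½x̂ᵀ(P₀ + Âᵀ(P_N − P_N B̂(Q̂_u + B̂ᵀP_NB̂)⁻¹B̂ᵀP_N)Â)x̂ where Q̂_u = B̂ = SQ̄⁻¹Sᵀ, provided Q̂_u + B̂ᵀP_NB̂ is invertible. -/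
open Matrix

lemma mulVec_dot' {m p : Type*} [Fintype m] [Fintype p] (S : Matrix m p ℝ) (u : p → ℝ)
    (w : m → ℝ) : (S *ᵥ u) ⬝ᵥ w = u ⬝ᵥ (Sᵀ *ᵥ w) := by
  rw [mulVec_transpose, dotProduct_comm u, ← dotProduct_mulVec, dotProduct_comm]

lemma dot_symm' {m : Type*} [Fintype m] {M : Matrix m m ℝ} (hM : Mᵀ = M) (x y : m → ℝ) :
    x ⬝ᵥ (M *ᵥ y) = y ⬝ᵥ (M *ᵥ x) := by
  rw [dotProduct_mulVec, ← hM, ← mulVec_transpose, transpose_transpose, hM, dotProduct_comm]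

lemma blockDiagonal_posDef {nu N : ℕ} {G : Fin N → Matrix (Fin nu) (Fin nu) ℝ}
    (hG : ∀ i, (G i).PosDef) : (Matrix.blockDiagonal G).PosDef := by
  refine Matrix.PosDef.of_dotProduct_mulVec_pos ?_ ?_
  · rw [IsHermitian, blockDiagonal_conjTranspose]
    rw [show (fun k => (G k)ᴴ) = G from funext fun k => (hG k).isHermitian]
  · intro x hx
    have hq : (star x) ⬝ᵥ ((Matrix.blockDiagonal G) *ᵥ x)
        = ∑ k : Fin N, (fun i => x (i, k)) ⬝ᵥ (G k *ᵥ fun j => x (j, k)) := by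
      simp only [star_trivial, dotProduct, mulVec, Fintype.sum_prod_type, blockDiagonal_apply,
        ite_mul, zero_mul, mul_ite, mul_zero, Finset.sum_ite_eq, Finset.mem_univ, if_true]
      rw [Finset.sum_comm]
    rw [hq]
    obtain ⟨p, hp⟩ := Function.ne_iff.mp hx
    refine Finset.sum_pos' (fun k _ => ?_) ⟨p.2, Finset.mem_univ _, ?_⟩
    · simpa using (hG k).posSemidef.dotProduct_mulVec_nonneg (fun i => x (i, k))
    · have hy : (fun i => x (i, p.2)) ≠ 0 := by
        intro h
        exact hp (by simpa using congrFun h p.1)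
      simpa using (hG p.2).dotProduct_mulVec_pos hy

theorem condensed_subproblem_value {n nu N : ℕ}
    (PN : Matrix (Fin n) (Fin n) ℝ) (hPN : PN.PosSemidef)
    (P₀ : Matrix (Fin n) (Fin n) ℝ) (hP₀ : P₀.PosSemidef)
    (Ah : Matrix (Fin n) (Fin n) ℝ)
    (G : Fin N → Matrix (Fin nu) (Fin nu) ℝ) (hG : ∀ i, (G i).PosDef)
    (Qb : Matrix (Fin nu × Fin N) (Fin nu × Fin N) ℝ)
    (hQb : Qb = Matrix.blockDiagonal G)
    (S : Matrix (Fin n) (Fin nu × Fin N) ℝ)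
    (Qhu Bh : Matrix (Fin n) (Fin n) ℝ)
    (hQhu : Qhu = S * Qb⁻¹ * Sᵀ) (hBh : Bh = S * Qb⁻¹ * Sᵀ)
    (hGh : IsUnit (Qhu + Bhᵀ * PN * Bh))
    (xh : Fin n → ℝ)
    -- the cost of the condensed problem, after eliminating x₀ = x̂ and x_N = Âx₀ + Sū
    (f : (Fin nu × Fin N → ℝ) → ℝ)
    (hf : ∀ ub, f ub =
      (1 / 2 : ℝ) * (xh ⬝ᵥ (P₀ *ᵥ xh))
      + (1 / 2 : ℝ) * (ub ⬝ᵥ (Qb *ᵥ ub))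
      + (1 / 2 : ℝ) * ((Ah *ᵥ xh + S *ᵥ ub) ⬝ᵥ (PN *ᵥ (Ah *ᵥ xh + S *ᵥ ub)))) :
    ∃ ubstar : Fin nu × Fin N → ℝ,
      (∀ ub, f ubstar ≤ f ub)
      -- uniqueness of the minimizer modulo ker(S)
      ∧ (∀ ub', (∀ ub, f ub' ≤ f ub) → S *ᵥ (ub' - ubstar) = 0)
      ∧ f ubstar = (1 / 2 : ℝ) *
          (xh ⬝ᵥ ((P₀ + Ahᵀ * (PN - PN * Bh * (Qhu + Bhᵀ * PN * Bh)⁻¹ * Bhᵀ * PN) * Ah) *ᵥ xh)) := by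
  classical
  have hQbPD : Qb.PosDef := hQb ▸ blockDiagonal_posDef hG
  have hQbdet : IsUnit Qb.det := (isUnit_iff_isUnit_det _).1 hQbPD.isUnit
  have hQbsym : Qbᵀ = Qb := by
    rw [← conjTranspose_eq_transpose_of_trivial]; exact hQbPD.isHermitian
  have hPNsym : PNᵀ = PN := by
    rw [← conjTranspose_eq_transpose_of_trivial]; exact hPN.isHermitian
  set W : Matrix (Fin n) (Fin n) ℝ := S * Qb⁻¹ * Sᵀ with hWdef
  have hQbisym : (Qb⁻¹)ᵀ = Qb⁻¹ := by rw [transpose_nonsing_inv, hQbsym]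
  have hWsym : Wᵀ = W := by
    simp [hWdef, transpose_mul, hQbisym, Matrix.mul_assoc]
  -- H = Qb + SᵀPNS positive definite
  set H : Matrix (Fin nu × Fin N) (Fin nu × Fin N) ℝ := Qb + Sᵀ * PN * S with hHdef
  have hSPS : (Sᵀ * PN * S).PosSemidef := by
    have := hPN.mul_mul_conjTranspose_same Sᵀ
    simpa [conjTranspose_eq_transpose_of_trivial] using this
  have hHPD : H.PosDef := hQbPD.add_posSemidef hSPS
  have hHdet : IsUnit H.det := (isUnit_iff_isUnit_det _).1 hHPD.isUnit
  have hHsym : Hᵀ = H := by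
    simp [hHdef, transpose_add, transpose_mul, hQbsym, hPNsym, Matrix.mul_assoc]
  have hHisym : (H⁻¹)ᵀ = H⁻¹ := by rw [transpose_nonsing_inv, hHsym]
  -- the matrix identity : Bh * M⁻¹ * Bhᵀ = S * H⁻¹ * Sᵀ
  have hM : Qhu + Bhᵀ * PN * Bh = W * (1 + PN * W) := by
    rw [hQhu, hBh, hWsym]; noncomm_ring
  have hMdet : IsUnit (W * (1 + PN * W)).det := (isUnit_iff_isUnit_det _).1 (hM ▸ hGh)
  have hWdet : IsUnit W.det := by
    rw [det_mul] at hMdet; exact isUnit_of_mul_isUnit_left hMdet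
  have hEdet : IsUnit (1 + PN * W).det := by
    rw [det_mul] at hMdet; exact isUnit_of_mul_isUnit_right hMdet
  have hkey1 : H * (Qb⁻¹ * Sᵀ) = Sᵀ * (1 + PN * W) := by
    rw [hHdef, hWdef, Matrix.add_mul, ← Matrix.mul_assoc Qb Qb⁻¹ Sᵀ,
      Matrix.mul_nonsing_inv _ hQbdet, Matrix.one_mul]
    simp only [Matrix.mul_add, Matrix.mul_one, Matrix.mul_assoc]
  have hkey2 : (S * H⁻¹ * Sᵀ) * (1 + PN * W) = W := by
    have : Qb⁻¹ * Sᵀ = H⁻¹ * (Sᵀ * (1 + PN * W)) := by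
      rw [← hkey1, ← Matrix.mul_assoc, Matrix.nonsing_inv_mul _ hHdet, Matrix.one_mul]
    calc (S * H⁻¹ * Sᵀ) * (1 + PN * W) = S * (H⁻¹ * (Sᵀ * (1 + PN * W))) := by
          simp only [Matrix.mul_assoc]
      _ = S * (Qb⁻¹ * Sᵀ) := by rw [← this]
      _ = W := by rw [hWdef, Matrix.mul_assoc]
  have hSHS : S * H⁻¹ * Sᵀ = W * (1 + PN * W)⁻¹ := by
    have h2 : (S * H⁻¹ * Sᵀ * (1 + PN * W)) * (1 + PN * W)⁻¹ = W * (1 + PN * W)⁻¹ := by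
      rw [hkey2]
    rwa [Matrix.mul_nonsing_inv_cancel_right _ _ hEdet] at h2
  have hBMB : Bh * (Qhu + Bhᵀ * PN * Bh)⁻¹ * Bhᵀ = S * H⁻¹ * Sᵀ := by
    rw [hM, hBh, hWsym, Matrix.mul_inv_rev, hSHS]
    calc W * ((1 + PN * W)⁻¹ * W⁻¹) * W
        = W * (1 + PN * W)⁻¹ * (W⁻¹ * W) := by noncomm_ring
      _ = W * (1 + PN * W)⁻¹ := by
          rw [Matrix.nonsing_inv_mul _ hWdet, Matrix.mul_one]
  -- quadratic expansion of f
  set a : Fin n → ℝ := Ah *ᵥ xh with hadef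
  set v : Fin nu × Fin N → ℝ := Sᵀ *ᵥ (PN *ᵥ a) with hvdef
  have expand : ∀ ub, f ub = (1/2 : ℝ) * (xh ⬝ᵥ (P₀ *ᵥ xh)) + (1/2 : ℝ) * (a ⬝ᵥ (PN *ᵥ a))
      + ub ⬝ᵥ v + (1/2 : ℝ) * (ub ⬝ᵥ (H *ᵥ ub)) := by
    intro ub
    rw [hf ub]
    have h1 : (a + S *ᵥ ub) ⬝ᵥ (PN *ᵥ (a + S *ᵥ ub))
        = a ⬝ᵥ (PN *ᵥ a) + 2 * (ub ⬝ᵥ v) + ub ⬝ᵥ ((Sᵀ * PN * S) *ᵥ ub) := by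
      rw [mulVec_add, dotProduct_add, add_dotProduct, add_dotProduct]
      have e1 : a ⬝ᵥ (PN *ᵥ (S *ᵥ ub)) = (S *ᵥ ub) ⬝ᵥ (PN *ᵥ a) := dot_symm' hPNsym _ _
      have e2 : (S *ᵥ ub) ⬝ᵥ (PN *ᵥ a) = ub ⬝ᵥ v := by
        rw [mulVec_dot', hvdef]
      have e3 : (S *ᵥ ub) ⬝ᵥ (PN *ᵥ (S *ᵥ ub)) = ub ⬝ᵥ ((Sᵀ * PN * S) *ᵥ ub) := by
        rw [mulVec_dot', mulVec_mulVec, mulVec_mulVec, Matrix.mul_assoc]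
      rw [e1, e2, e3]; ring
    have h2 : ub ⬝ᵥ (H *ᵥ ub) = ub ⬝ᵥ (Qb *ᵥ ub) + ub ⬝ᵥ ((Sᵀ * PN * S) *ᵥ ub) := by
      rw [hHdef, Matrix.add_mulVec, dotProduct_add]
    rw [h1, h2]; ring
  set ubstar : Fin nu × Fin N → ℝ := -(H⁻¹ *ᵥ v) with hubdef
  have hHub : H *ᵥ ubstar = -v := by
    rw [hubdef, mulVec_neg, mulVec_mulVec, Matrix.mul_nonsing_inv _ hHdet, one_mulVec]
  have hdiff : ∀ ub, f ub = f ubstar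
      + (1/2 : ℝ) * ((ub - ubstar) ⬝ᵥ (H *ᵥ (ub - ubstar))) := by
    intro ub
    have hs : ubstar ⬝ᵥ (H *ᵥ ub) = ub ⬝ᵥ (H *ᵥ ubstar) := dot_symm' hHsym _ _
    have e : (ub - ubstar) ⬝ᵥ (H *ᵥ (ub - ubstar))
        = ub ⬝ᵥ (H *ᵥ ub) - ub ⬝ᵥ (H *ᵥ ubstar) - ubstar ⬝ᵥ (H *ᵥ ub)
          + ubstar ⬝ᵥ (H *ᵥ ubstar) := by
      rw [mulVec_sub, sub_dotProduct, dotProduct_sub, dotProduct_sub]; ring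
    rw [expand ub, expand ubstar, e, hs, hHub]
    simp only [dotProduct_neg]
    ring
  have hmin : ∀ ub, f ubstar ≤ f ub := by
    intro ub
    rw [hdiff ub]
    have hnn := hHPD.posSemidef.dotProduct_mulVec_nonneg (ub - ubstar)
    simp only [star_trivial] at hnn
    linarith
  refine ⟨ubstar, hmin, ?_, ?_⟩
  · intro ub' hub'
    have heq : f ub' = f ubstar := le_antisymm (hub' ubstar) (hmin ub')
    have h0 : (ub' - ubstar) ⬝ᵥ (H *ᵥ (ub' - ubstar)) = 0 := by
      have := hdiff ub'
      rw [heq] at this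
      linarith
    have hd0 : ub' - ubstar = 0 := by
      by_contra hne
      have := hHPD.dotProduct_mulVec_pos hne
      simp only [star_trivial] at this
      linarith
    rw [hd0, mulVec_zero]
  · -- the value
    have hval : f ubstar = (1/2 : ℝ) * (xh ⬝ᵥ (P₀ *ᵥ xh)) + (1/2 : ℝ) * (a ⬝ᵥ (PN *ᵥ a))
        - (1/2 : ℝ) * (v ⬝ᵥ (H⁻¹ *ᵥ v)) := by
      have h1 : ubstar ⬝ᵥ v = -(v ⬝ᵥ (H⁻¹ *ᵥ v)) := by
        rw [hubdef, neg_dotProduct, dotProduct_comm]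
      have h2 : ubstar ⬝ᵥ (H *ᵥ ubstar) = v ⬝ᵥ (H⁻¹ *ᵥ v) := by
        rw [hHub, hubdef, neg_dotProduct, dotProduct_neg, neg_neg, dotProduct_comm]
      rw [expand ubstar, h1, h2]; ring
    have e1 : a ⬝ᵥ (PN *ᵥ a) = xh ⬝ᵥ ((Ahᵀ * (PN * Ah)) *ᵥ xh) := by
      rw [hadef, ← mulVec_mulVec, ← mulVec_mulVec, ← mulVec_dot']
    have e2 : v ⬝ᵥ (H⁻¹ *ᵥ v) = xh ⬝ᵥ ((Ahᵀ * (PN * (S * (H⁻¹ * (Sᵀ * (PN * Ah)))))) *ᵥ xh) := by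
      rw [hvdef, hadef]
      rw [mulVec_dot' Sᵀ, transpose_transpose]
      rw [mulVec_dot' PN, hPNsym]
      rw [mulVec_dot' Ah]
      simp only [mulVec_mulVec]
    have hmid : PN * Bh * (Qhu + Bhᵀ * PN * Bh)⁻¹ * Bhᵀ * PN
        = PN * (S * (H⁻¹ * (Sᵀ * PN))) := by
      calc PN * Bh * (Qhu + Bhᵀ * PN * Bh)⁻¹ * Bhᵀ * PN
          = PN * (Bh * (Qhu + Bhᵀ * PN * Bh)⁻¹ * Bhᵀ) * PN := by
            simp only [Matrix.mul_assoc]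
        _ = PN * (S * H⁻¹ * Sᵀ) * PN := by rw [hBMB]
        _ = PN * (S * (H⁻¹ * (Sᵀ * PN))) := by simp only [Matrix.mul_assoc]
    rw [hval]
    rw [Matrix.add_mulVec, dotProduct_add, hmid]
    have hdist : Ahᵀ * (PN - PN * (S * (H⁻¹ * (Sᵀ * PN)))) * Ah
        = Ahᵀ * (PN * Ah) - Ahᵀ * (PN * (S * (H⁻¹ * (Sᵀ * (PN * Ah))))) := by
      rw [Matrix.mul_sub, Matrix.sub_mul]
      simp only [Matrix.mul_assoc]
    rw [hdist, Matrix.sub_mulVec, dotProduct_sub, ← e1, ← e2]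
    ring
end

section
/- For the finite-horizon LQ problem with dynamics x_{t+1} = A_t x_t + B_t u_t, stage costs given by positive semidefinite block matrices Q_t with Q_{u,t} positive definite, and terminal cost ½x_NᵀQ_{x,N}x_N (Q_{x,N} positive semidefinite), the value function at any time t as a function of the state x_t is ½x_tᵀP_tx_t, where P_t is given by the backward Riccati recursion starting from P_N = Q_{x,N}, and the unique optimal control is u_t = K_{t+1}x_t with K_{t+1} = −(Q_{u,t} + B_tᵀP_{t+1}B_t)⁻¹(Q_{xu,t} + A_tᵀP_{t+1}B_t)ᵀ. -/
open Matrix Finset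

private lemma dp_t {n m : ℕ} (M : Matrix (Fin n) (Fin m) ℝ) (x : Fin m → ℝ) (y : Fin n → ℝ) :
    y ⬝ᵥ (M *ᵥ x) = x ⬝ᵥ (Mᵀ *ᵥ y) := by
  rw [Matrix.mulVec_transpose, dotProduct_comm x, ← Matrix.dotProduct_mulVec]

private lemma block_nonneg {nx nu : ℕ} (Qx : Matrix (Fin nx) (Fin nx) ℝ)
    (Qxu : Matrix (Fin nx) (Fin nu) ℝ) (Qu : Matrix (Fin nu) (Fin nu) ℝ)
    (h : (Matrix.fromBlocks Qx Qxu Qxuᵀ Qu).PosSemidef) (x : Fin nx → ℝ) (u : Fin nu → ℝ) :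
    0 ≤ x ⬝ᵥ Qx *ᵥ x + 2 * (x ⬝ᵥ Qxu *ᵥ u) + u ⬝ᵥ Qu *ᵥ u := by
  have h2 := h.dotProduct_mulVec_nonneg (Sum.elim x u)
  simp only [star_trivial, Matrix.fromBlocks_mulVec, sumElim_dotProduct_sumElim,
    dotProduct_add, Sum.elim_comp_inl, Sum.elim_comp_inr] at h2
  have : u ⬝ᵥ Qxuᵀ *ᵥ x = x ⬝ᵥ Qxu *ᵥ u := by rw [← dp_t]
  linarith

private lemma block_qx_symm {nx nu : ℕ} (Qx : Matrix (Fin nx) (Fin nx) ℝ)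
    (Qxu : Matrix (Fin nx) (Fin nu) ℝ) (Qu : Matrix (Fin nu) (Fin nu) ℝ)
    (h : (Matrix.fromBlocks Qx Qxu Qxuᵀ Qu).PosSemidef) : Qxᵀ = Qx := by
  have h1 := h.1
  rw [Matrix.IsHermitian, Matrix.fromBlocks_conjTranspose] at h1
  have := congrArg Matrix.toBlocks₁₁ h1
  simpa [Matrix.toBlocks_fromBlocks₁₁] using this

private lemma complete_square {nx nu : ℕ}
    (Qx : Matrix (Fin nx) (Fin nx) ℝ) (Qu G : Matrix (Fin nu) (Fin nu) ℝ)
    (Qxu : Matrix (Fin nx) (Fin nu) ℝ)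
    (A Pt P : Matrix (Fin nx) (Fin nx) ℝ) (B : Matrix (Fin nx) (Fin nu) ℝ)
    (K : Matrix (Fin nu) (Fin nx) ℝ)
    (hPsym : Pᵀ = P) (hGsym : Gᵀ = G)
    (hG : G = Qu + Bᵀ * P * B)
    (hGK : G * K = -(Qxu + Aᵀ * P * B)ᵀ)
    (hPt : Pt = (Qx + Aᵀ * P * A) - Kᵀ * G * K)
    (x : Fin nx → ℝ) (u : Fin nu → ℝ) :
    x ⬝ᵥ Qx *ᵥ x + 2 * (x ⬝ᵥ Qxu *ᵥ u) + u ⬝ᵥ Qu *ᵥ u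
      + (A *ᵥ x + B *ᵥ u) ⬝ᵥ P *ᵥ (A *ᵥ x + B *ᵥ u)
    = x ⬝ᵥ Pt *ᵥ x + (u - K *ᵥ x) ⬝ᵥ G *ᵥ (u - K *ᵥ x) := by
  set a := A *ᵥ x with ha
  set b := B *ᵥ u with hb
  set k := K *ᵥ x with hk
  have e1 : (a + b) ⬝ᵥ P *ᵥ (a + b) = a ⬝ᵥ P *ᵥ a + 2 * (a ⬝ᵥ P *ᵥ b) + b ⬝ᵥ P *ᵥ b := by
    have hba : b ⬝ᵥ P *ᵥ a = a ⬝ᵥ P *ᵥ b := by rw [dp_t P a b, hPsym]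
    simp [Matrix.mulVec_add, dotProduct_add, add_dotProduct, hba]; ring
  have e2 : x ⬝ᵥ Pt *ᵥ x = x ⬝ᵥ Qx *ᵥ x + a ⬝ᵥ P *ᵥ a - k ⬝ᵥ G *ᵥ k := by
    rw [hPt]
    have h1 : x ⬝ᵥ (Aᵀ * P * A) *ᵥ x = a ⬝ᵥ P *ᵥ a := by
      rw [ha, ← Matrix.mulVec_mulVec, dp_t (Aᵀ * P), Matrix.transpose_mul,
        Matrix.transpose_transpose, ← Matrix.mulVec_mulVec, hPsym]
    have h2 : x ⬝ᵥ (Kᵀ * G * K) *ᵥ x = k ⬝ᵥ G *ᵥ k := by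
      rw [hk, ← Matrix.mulVec_mulVec, dp_t (Kᵀ * G), Matrix.transpose_mul,
        Matrix.transpose_transpose, ← Matrix.mulVec_mulVec, hGsym]
    simp [Matrix.sub_mulVec, Matrix.add_mulVec, dotProduct_sub, dotProduct_add, h1, h2]
  have e3 : (u - k) ⬝ᵥ G *ᵥ (u - k) = u ⬝ᵥ G *ᵥ u - 2 * (u ⬝ᵥ G *ᵥ k) + k ⬝ᵥ G *ᵥ k := by
    have hku : k ⬝ᵥ G *ᵥ u = u ⬝ᵥ G *ᵥ k := by rw [dp_t G u k, hGsym]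
    simp [Matrix.mulVec_sub, dotProduct_sub, sub_dotProduct, hku]; ring
  have e4 : u ⬝ᵥ G *ᵥ u = u ⬝ᵥ Qu *ᵥ u + b ⬝ᵥ P *ᵥ b := by
    rw [hG]
    have h1 : u ⬝ᵥ (Bᵀ * P * B) *ᵥ u = b ⬝ᵥ P *ᵥ b := by
      rw [hb, ← Matrix.mulVec_mulVec, dp_t (Bᵀ * P), Matrix.transpose_mul,
        Matrix.transpose_transpose, ← Matrix.mulVec_mulVec, hPsym]
    simp [Matrix.add_mulVec, dotProduct_add, h1]
  have e5 : u ⬝ᵥ G *ᵥ k = -(x ⬝ᵥ Qxu *ᵥ u) - a ⬝ᵥ P *ᵥ b := by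
    rw [hk, Matrix.mulVec_mulVec, hGK]
    have h1 : u ⬝ᵥ (-(Qxu + Aᵀ * P * B)ᵀ) *ᵥ x = -(x ⬝ᵥ (Qxu + Aᵀ * P * B) *ᵥ u) := by
      rw [Matrix.neg_mulVec, dotProduct_neg, ← dp_t]
    rw [h1]
    have h2 : x ⬝ᵥ (Aᵀ * P * B) *ᵥ u = a ⬝ᵥ P *ᵥ b := by
      rw [ha, hb, ← Matrix.mulVec_mulVec, dp_t (Aᵀ * P), Matrix.transpose_mul,
        Matrix.transpose_transpose, ← Matrix.mulVec_mulVec, hPsym,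
        dp_t P (A *ᵥ x) (B *ᵥ u), hPsym]
    simp [Matrix.add_mulVec, dotProduct_add, h2]
    ring
  rw [e1, e2, e3, e4, e5]
  ring

private lemma riccati_aux {nx nu N : ℕ}
    (A : ℕ → Matrix (Fin nx) (Fin nx) ℝ) (B : ℕ → Matrix (Fin nx) (Fin nu) ℝ)
    (Qx : ℕ → Matrix (Fin nx) (Fin nx) ℝ) (Qu : ℕ → Matrix (Fin nu) (Fin nu) ℝ)
    (Qxu : ℕ → Matrix (Fin nx) (Fin nu) ℝ)
    (QxN : Matrix (Fin nx) (Fin nx) ℝ)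
    (hQ : ∀ t < N, (Matrix.fromBlocks (Qx t) (Qxu t) (Qxu t)ᵀ (Qu t)).PosSemidef)
    (hQu : ∀ t < N, (Qu t).PosDef)
    (hQxN : QxN.PosSemidef)
    (P : ℕ → Matrix (Fin nx) (Fin nx) ℝ)
    (K : ℕ → Matrix (Fin nu) (Fin nx) ℝ)
    (hPN : P N = QxN)
    (hK : ∀ t < N, K (t + 1) =
        -((Qu t + (B t)ᵀ * P (t + 1) * B t)⁻¹ * (Qxu t + (A t)ᵀ * P (t + 1) * B t)ᵀ))
    (hP : ∀ t < N, P t = (Qx t + (A t)ᵀ * P (t + 1) * A t)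
        - (K (t + 1))ᵀ * (Qu t + (B t)ᵀ * P (t + 1) * B t) * K (t + 1)) :
    ∀ k tbar, tbar + k = N →
    (((P tbar)ᵀ = P tbar) ∧ (∀ z : Fin nx → ℝ, 0 ≤ z ⬝ᵥ P tbar *ᵥ z)) ∧
    ∀ (x : ℕ → Fin nx → ℝ) (u : ℕ → Fin nu → ℝ),
      (∀ t ∈ Finset.Ico tbar N, x (t + 1) = A t *ᵥ x t + B t *ᵥ u t) →
      ((1 / 2 : ℝ) * ∑ t ∈ Finset.Ico tbar N,
            (x t ⬝ᵥ (Qx t *ᵥ x t) + 2 * (x t ⬝ᵥ (Qxu t *ᵥ u t)) + u t ⬝ᵥ (Qu t *ᵥ u t))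
          + (1 / 2 : ℝ) * (x N ⬝ᵥ (QxN *ᵥ x N))
        ≥ (1 / 2 : ℝ) * (x tbar ⬝ᵥ (P tbar *ᵥ x tbar))) ∧
      (((1 / 2 : ℝ) * ∑ t ∈ Finset.Ico tbar N,
            (x t ⬝ᵥ (Qx t *ᵥ x t) + 2 * (x t ⬝ᵥ (Qxu t *ᵥ u t)) + u t ⬝ᵥ (Qu t *ᵥ u t))
          + (1 / 2 : ℝ) * (x N ⬝ᵥ (QxN *ᵥ x N))
        = (1 / 2 : ℝ) * (x tbar ⬝ᵥ (P tbar *ᵥ x tbar)))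
        ↔ (∀ t ∈ Finset.Ico tbar N, u t = K (t + 1) *ᵥ x t)) := by
  intro k
  induction k with
  | zero =>
    intro tbar htb
    have htN : tbar = N := by omega
    subst htN
    refine ⟨⟨?_, ?_⟩, ?_⟩
    · rw [hPN]
      simpa using hQxN.1.eq
    · intro z
      rw [hPN]
      simpa using hQxN.dotProduct_mulVec_nonneg z
    · intro x u _
      simp [hPN]
  | succ k ih =>
    intro tbar htb
    have ht : tbar < N := by omega
    obtain ⟨⟨hP1sym, hP1nn⟩, ihmain⟩ := ih (tbar + 1) (by omega)
    set P1 := P (tbar + 1) with hP1def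
    have hP1psd : P1.PosSemidef := by
      refine Matrix.PosSemidef.of_dotProduct_mulVec_nonneg ?_ ?_
      · rw [Matrix.IsHermitian]
        simpa using hP1sym
      · intro z; simpa using hP1nn z
    set G := Qu tbar + (B tbar)ᵀ * P1 * B tbar with hGdef
    have hGpd : G.PosDef := by
      refine (hQu tbar ht).add_posSemidef ?_
      simpa using hP1psd.conjTranspose_mul_mul_same (B tbar)
    have hGsym : Gᵀ = G := by
      have h := hGpd.1
      rw [Matrix.IsHermitian] at h
      simpa using h
    have hGK : G * K (tbar + 1) = -(Qxu tbar + (A tbar)ᵀ * P1 * B tbar)ᵀ := by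
      rw [hK tbar ht, ← hP1def, ← hGdef, Matrix.mul_neg, ← Matrix.mul_assoc,
        Matrix.mul_nonsing_inv _ (isUnit_iff_ne_zero.mpr hGpd.det_pos.ne'), Matrix.one_mul]
    have hPt := hP tbar ht
    rw [← hP1def, ← hGdef] at hPt
    have hQxsym : (Qx tbar)ᵀ = Qx tbar := block_qx_symm _ _ _ (hQ tbar ht)
    have key : ∀ (z : Fin nx → ℝ) (w : Fin nu → ℝ),
        z ⬝ᵥ Qx tbar *ᵥ z + 2 * (z ⬝ᵥ Qxu tbar *ᵥ w) + w ⬝ᵥ Qu tbar *ᵥ w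
          + (A tbar *ᵥ z + B tbar *ᵥ w) ⬝ᵥ P1 *ᵥ (A tbar *ᵥ z + B tbar *ᵥ w)
        = z ⬝ᵥ P tbar *ᵥ z + (w - K (tbar + 1) *ᵥ z) ⬝ᵥ G *ᵥ (w - K (tbar + 1) *ᵥ z) :=
      complete_square (Qx tbar) (Qu tbar) G (Qxu tbar) (A tbar) (P tbar) P1 (B tbar)
        (K (tbar + 1)) hP1sym hGsym hGdef hGK hPt
    -- positive semidefiniteness of P tbar
    have hPtnn : ∀ z : Fin nx → ℝ, 0 ≤ z ⬝ᵥ P tbar *ᵥ z := by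
      intro z
      have h0 := key z (K (tbar + 1) *ᵥ z)
      have hq : (K (tbar + 1) *ᵥ z - K (tbar + 1) *ᵥ z) ⬝ᵥ
          G *ᵥ (K (tbar + 1) *ᵥ z - K (tbar + 1) *ᵥ z) = 0 := by simp
      rw [hq, add_zero] at h0
      have hb1 := block_nonneg _ _ _ (hQ tbar ht) z (K (tbar + 1) *ᵥ z)
      have hb2 := hP1nn (A tbar *ᵥ z + B tbar *ᵥ (K (tbar + 1) *ᵥ z))
      linarith
    have hPtsym : (P tbar)ᵀ = P tbar := by
      rw [hPt]
      simp only [Matrix.transpose_sub, Matrix.transpose_add, Matrix.transpose_mul,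
        Matrix.transpose_transpose, hQxsym, hGsym, hP1sym, Matrix.mul_assoc]
    refine ⟨⟨hPtsym, hPtnn⟩, ?_⟩
    intro x u hdyn
    have hdyn1 : ∀ t ∈ Finset.Ico (tbar + 1) N, x (t + 1) = A t *ᵥ x t + B t *ᵥ u t := by
      intro t htm
      refine hdyn t ?_
      simp only [Finset.mem_Ico] at htm ⊢
      omega
    obtain ⟨ihge, ihiff⟩ := ihmain x u hdyn1
    have hsum : ∑ t ∈ Finset.Ico tbar N,
          (x t ⬝ᵥ (Qx t *ᵥ x t) + 2 * (x t ⬝ᵥ (Qxu t *ᵥ u t)) + u t ⬝ᵥ (Qu t *ᵥ u t))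
        = (x tbar ⬝ᵥ (Qx tbar *ᵥ x tbar) + 2 * (x tbar ⬝ᵥ (Qxu tbar *ᵥ u tbar))
            + u tbar ⬝ᵥ (Qu tbar *ᵥ u tbar))
          + ∑ t ∈ Finset.Ico (tbar + 1) N,
              (x t ⬝ᵥ (Qx t *ᵥ x t) + 2 * (x t ⬝ᵥ (Qxu t *ᵥ u t)) + u t ⬝ᵥ (Qu t *ᵥ u t)) :=
      Finset.sum_eq_sum_Ico_succ_bot ht _
    have hx1 : x (tbar + 1) = A tbar *ᵥ x tbar + B tbar *ᵥ u tbar :=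
      hdyn tbar (by simp [Finset.mem_Ico]; omega)
    set w := u tbar - K (tbar + 1) *ᵥ x tbar with hw
    have hkey : x tbar ⬝ᵥ Qx tbar *ᵥ x tbar + 2 * (x tbar ⬝ᵥ Qxu tbar *ᵥ u tbar)
          + u tbar ⬝ᵥ Qu tbar *ᵥ u tbar + x (tbar + 1) ⬝ᵥ P1 *ᵥ x (tbar + 1)
        = x tbar ⬝ᵥ P tbar *ᵥ x tbar + w ⬝ᵥ G *ᵥ w := by
      rw [hx1]; exact key (x tbar) (u tbar)
    have hwnn : 0 ≤ w ⬝ᵥ G *ᵥ w := by simpa using hGpd.posSemidef.dotProduct_mulVec_nonneg w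
    constructor
    · rw [hsum]
      have : (1 / 2 : ℝ) * ∑ t ∈ Finset.Ico (tbar + 1) N,
            (x t ⬝ᵥ (Qx t *ᵥ x t) + 2 * (x t ⬝ᵥ (Qxu t *ᵥ u t)) + u t ⬝ᵥ (Qu t *ᵥ u t))
          + (1 / 2 : ℝ) * (x N ⬝ᵥ (QxN *ᵥ x N))
          ≥ (1 / 2 : ℝ) * (x (tbar + 1) ⬝ᵥ (P1 *ᵥ x (tbar + 1))) := ihge
      linarith
    · rw [hsum]
      constructor
      · intro heq
        have heq1 : (1 / 2 : ℝ) * ∑ t ∈ Finset.Ico (tbar + 1) N,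
              (x t ⬝ᵥ (Qx t *ᵥ x t) + 2 * (x t ⬝ᵥ (Qxu t *ᵥ u t)) + u t ⬝ᵥ (Qu t *ᵥ u t))
            + (1 / 2 : ℝ) * (x N ⬝ᵥ (QxN *ᵥ x N))
            = (1 / 2 : ℝ) * (x (tbar + 1) ⬝ᵥ (P1 *ᵥ x (tbar + 1))) := by linarith
        have hw0 : w ⬝ᵥ G *ᵥ w = 0 := by linarith
        have hwz : w = 0 := by
          by_contra hwne
          have := hGpd.dotProduct_mulVec_pos hwne
          simp only [star_trivial] at this
          linarith
        intro t htm
        rcases Finset.mem_Ico.mp htm with ⟨h1, h2⟩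
        rcases Nat.eq_or_lt_of_le h1 with h3 | h3
        · rw [hw] at hwz
          rw [← h3]
          exact sub_eq_zero.mp hwz
        · exact (ihiff.mp heq1) t (Finset.mem_Ico.mpr ⟨by omega, h2⟩)
      · intro hctrl
        have hw0 : w = 0 := by
          rw [hw, sub_eq_zero]
          exact hctrl tbar (Finset.mem_Ico.mpr ⟨le_refl _, ht⟩)
        have heq1 := ihiff.mpr (fun t htm => hctrl t (by
          rcases Finset.mem_Ico.mp htm with ⟨h1, h2⟩
          exact Finset.mem_Ico.mpr ⟨by omega, h2⟩))
        have hwg : w ⬝ᵥ G *ᵥ w = 0 := by rw [hw0]; simp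
        linarith

theorem riccati_value_function {nx nu N : ℕ}
    (A : ℕ → Matrix (Fin nx) (Fin nx) ℝ) (B : ℕ → Matrix (Fin nx) (Fin nu) ℝ)
    (Qx : ℕ → Matrix (Fin nx) (Fin nx) ℝ) (Qu : ℕ → Matrix (Fin nu) (Fin nu) ℝ)
    (Qxu : ℕ → Matrix (Fin nx) (Fin nu) ℝ)
    (QxN : Matrix (Fin nx) (Fin nx) ℝ)
    (hQ : ∀ t < N, (Matrix.fromBlocks (Qx t) (Qxu t) (Qxu t)ᵀ (Qu t)).PosSemidef)
    (hQu : ∀ t < N, (Qu t).PosDef)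
    (hQxN : QxN.PosSemidef)
    (P : ℕ → Matrix (Fin nx) (Fin nx) ℝ)
    (K : ℕ → Matrix (Fin nu) (Fin nx) ℝ)
    (hPN : P N = QxN)
    (hK : ∀ t < N, K (t + 1) =
        -((Qu t + (B t)ᵀ * P (t + 1) * B t)⁻¹ * (Qxu t + (A t)ᵀ * P (t + 1) * B t)ᵀ))
    (hP : ∀ t < N, P t = (Qx t + (A t)ᵀ * P (t + 1) * A t)
        - (K (t + 1))ᵀ * (Qu t + (B t)ᵀ * P (t + 1) * B t) * K (t + 1))
    (tbar : ℕ) (htbar : tbar ≤ N) (ξ : Fin nx → ℝ) :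
    ∀ (x : ℕ → Fin nx → ℝ) (u : ℕ → Fin nu → ℝ),
      x tbar = ξ →
      (∀ t ∈ Finset.Ico tbar N, x (t + 1) = A t *ᵥ x t + B t *ᵥ u t) →
      ((1 / 2 : ℝ) * ∑ t ∈ Finset.Ico tbar N,
            (x t ⬝ᵥ (Qx t *ᵥ x t) + 2 * (x t ⬝ᵥ (Qxu t *ᵥ u t))
              + u t ⬝ᵥ (Qu t *ᵥ u t))
          + (1 / 2 : ℝ) * (x N ⬝ᵥ (QxN *ᵥ x N))
        ≥ (1 / 2 : ℝ) * (ξ ⬝ᵥ (P tbar *ᵥ ξ)))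
      ∧ (((1 / 2 : ℝ) * ∑ t ∈ Finset.Ico tbar N,
            (x t ⬝ᵥ (Qx t *ᵥ x t) + 2 * (x t ⬝ᵥ (Qxu t *ᵥ u t))
              + u t ⬝ᵥ (Qu t *ᵥ u t))
          + (1 / 2 : ℝ) * (x N ⬝ᵥ (QxN *ᵥ x N))
        = (1 / 2 : ℝ) * (ξ ⬝ᵥ (P tbar *ᵥ ξ)))
        ↔ (∀ t ∈ Finset.Ico tbar N, u t = K (t + 1) *ᵥ x t)) := by
  intro x u hxi hdyn
  subst hxi
  exact (riccati_aux A B Qx Qu Qxu QxN hQ hQu hQxN P K hPN hK hP (N - tbar) tbar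
    (by omega)).2 x u hdyn
end

section
/- Let K_{0,t+1} be the Riccati feedback gains computed with preliminary terminal cost P_N = 0, and G_{0,t+1} the corresponding matrices G. For the true problem with arbitrary positive semidefinite terminal cost P_N ⪰ 0, the optimal control can be written u_t = K_{0,t+1}x_t + ū_t, and the optimal perturbations ū = (ū_0,…,ū_{N−1}) are a minimizer of ½ūᵀQ̄ū + ½(Âx₀ + Sū)ᵀP_N(Âx₀ + Sū), where Q̄ = blkdiag(G_{0,1},…,G_{0,N}), Â = ∏_{t=0}^{N−1}(A_t+B_tK_{0,t+1}), and S has block columns (∏_{s=t+1}^{N−1}(A_s+B_sK_{s+1,0}))B_t. -/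
open Matrix Finset

/-- `prodDesc M a k = M (a + k - 1) * ⋯ * M (a + 1) * M a` (k factors, latest leftmost). -/
def prodDesc {n : ℕ} (M : ℕ → Matrix (Fin n) (Fin n) ℝ) (a : ℕ) : ℕ → Matrix (Fin n) (Fin n) ℝ
  | 0 => 1
  | k + 1 => M (a + k) * prodDesc M a k

/-- The ordered product `∏_{t=t₁}^{t₂} M_t = M_{t₂} ⋯ M_{t₁}`, equal to `1` when `t₂ < t₁`. -/
def prodInterval {n : ℕ} (M : ℕ → Matrix (Fin n) (Fin n) ℝ) (t₁ t₂ : ℕ) :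
    Matrix (Fin n) (Fin n) ℝ :=
  prodDesc M t₁ (t₂ + 1 - t₁)

lemma transDot {m n : ℕ} (M : Matrix (Fin m) (Fin n) ℝ) (x : Fin n → ℝ) (z : Fin m → ℝ) :
    x ⬝ᵥ (Mᵀ *ᵥ z) = (M *ᵥ x) ⬝ᵥ z := by
  rw [Matrix.dotProduct_mulVec, Matrix.vecMul_transpose]

lemma symDot {n : ℕ} (M : Matrix (Fin n) (Fin n) ℝ) (hM : Mᵀ = M) (x z : Fin n → ℝ) :
    x ⬝ᵥ (M *ᵥ z) = z ⬝ᵥ (M *ᵥ x) := by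
  conv_lhs => rw [← hM]
  rw [transDot, dotProduct_comm]

lemma step_id {nx nu : ℕ} (a : Matrix (Fin nx) (Fin nx) ℝ) (b : Matrix (Fin nx) (Fin nu) ℝ)
    (P Pt : Matrix (Fin nx) (Fin nx) ℝ) (G : Matrix (Fin nu) (Fin nu) ℝ)
    (K : Matrix (Fin nu) (Fin nx) ℝ)
    (qx : Matrix (Fin nx) (Fin nx) ℝ) (qxu : Matrix (Fin nx) (Fin nu) ℝ)
    (qu : Matrix (Fin nu) (Fin nu) ℝ)
    (hP : Pᵀ = P) (hG : Gᵀ = G)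
    (hqu : qu = G - bᵀ * P * b)
    (hqxu : qxu = -(Kᵀ * G) - aᵀ * P * b)
    (hPt : Pt = (qx + aᵀ * P * a) - Kᵀ * G * K)
    (y : Fin nx → ℝ) (w : Fin nu → ℝ) :
    (y ⬝ᵥ (qx *ᵥ y) + 2 * (y ⬝ᵥ (qxu *ᵥ w)) + w ⬝ᵥ (qu *ᵥ w))
      - (w - K *ᵥ y) ⬝ᵥ (G *ᵥ (w - K *ᵥ y))
    = y ⬝ᵥ (Pt *ᵥ y) - (a *ᵥ y + b *ᵥ w) ⬝ᵥ (P *ᵥ (a *ᵥ y + b *ᵥ w)) := by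
  subst hqu hqxu hPt
  simp only [Matrix.sub_mulVec, Matrix.add_mulVec, Matrix.neg_mulVec, Matrix.mulVec_add,
    Matrix.mulVec_sub, ← Matrix.mulVec_mulVec, dotProduct_add, dotProduct_sub, add_dotProduct,
    sub_dotProduct, dotProduct_neg, neg_dotProduct, transDot]
  linear_combination (-1 : ℝ) * symDot P hP (a *ᵥ y) (b *ᵥ w) + symDot G hG w (K *ᵥ y)

lemma mulVec_sum' {m n : ℕ} (A : Matrix (Fin m) (Fin n) ℝ) (s : Finset ℕ)
    (f : ℕ → Fin n → ℝ) : A *ᵥ (∑ i ∈ s, f i) = ∑ i ∈ s, A *ᵥ f i :=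
  map_sum (Matrix.mulVecLin A) f s

lemma closed_loop {nx nu : ℕ} (M : ℕ → Matrix (Fin nx) (Fin nx) ℝ)
    (B : ℕ → Matrix (Fin nx) (Fin nu) ℝ) (y : ℕ → Fin nx → ℝ) (v : ℕ → Fin nu → ℝ) :
    ∀ k, (∀ t < k, y (t + 1) = M t *ᵥ y t + B t *ᵥ v t) →
      y k = prodDesc M 0 k *ᵥ y 0
        + ∑ t ∈ Finset.range k, (prodDesc M (t + 1) (k - 1 - t) * B t) *ᵥ v t := by
  intro k
  induction k with
  | zero => intro _; simp [prodDesc]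
  | succ k ih =>
    intro h
    rw [h k (by omega), ih (fun t ht => h t (by omega)), Finset.sum_range_succ]
    have h0 : prodDesc M 0 (k + 1) = M k * prodDesc M 0 k := by
      show M (0 + k) * prodDesc M 0 k = _
      rw [Nat.zero_add]
    have hlast : k + 1 - 1 - k = 0 := by omega
    rw [Matrix.mulVec_add, mulVec_sum', h0, hlast]
    have hsum : ∀ t ∈ Finset.range k,
        M k *ᵥ ((prodDesc M (t + 1) (k - 1 - t) * B t) *ᵥ v t)
        = (prodDesc M (t + 1) (k + 1 - 1 - t) * B t) *ᵥ v t := by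
      intro t ht'
      have ht := Finset.mem_range.1 ht'
      have h1 : k + 1 - 1 - t = (k - 1 - t) + 1 := by omega
      have hk : t + 1 + (k - 1 - t) = k := by omega
      have h2 : prodDesc M (t + 1) ((k - 1 - t) + 1)
          = M k * prodDesc M (t + 1) (k - 1 - t) := by
        show M (t + 1 + (k - 1 - t)) * prodDesc M (t + 1) (k - 1 - t) = _
        rw [hk]
      rw [Matrix.mulVec_mulVec, h1, h2, Matrix.mul_assoc]
    rw [Finset.sum_congr rfl hsum, Matrix.mulVec_mulVec]
    have : prodDesc M (k + 1) 0 = 1 := rfl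
    rw [this, Matrix.one_mul]
    abel

theorem condensation_optimal_perturbation {nx nu N : ℕ}
    (A : ℕ → Matrix (Fin nx) (Fin nx) ℝ) (B : ℕ → Matrix (Fin nx) (Fin nu) ℝ)
    (Qx : ℕ → Matrix (Fin nx) (Fin nx) ℝ) (Qu : ℕ → Matrix (Fin nu) (Fin nu) ℝ)
    (Qxu : ℕ → Matrix (Fin nx) (Fin nu) ℝ)
    (hQ : ∀ t < N, (Matrix.fromBlocks (Qx t) (Qxu t) (Qxu t)ᵀ (Qu t)).PosSemidef)
    (hQu : ∀ t < N, (Qu t).PosDef)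
    -- preliminary Riccati quantities computed with terminal cost P_N = 0
    (P0 : ℕ → Matrix (Fin nx) (Fin nx) ℝ)
    (G0 : ℕ → Matrix (Fin nu) (Fin nu) ℝ)
    (K0 : ℕ → Matrix (Fin nu) (Fin nx) ℝ)
    (hPN0 : P0 N = 0)
    (hG0 : ∀ t < N, G0 (t + 1) = Qu t + (B t)ᵀ * P0 (t + 1) * B t)
    (hK0 : ∀ t < N, G0 (t + 1) * K0 (t + 1) = -(Qxu t + (A t)ᵀ * P0 (t + 1) * B t)ᵀ)
    (hP0 : ∀ t < N, P0 t = (Qx t + (A t)ᵀ * P0 (t + 1) * A t)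
        - (K0 (t + 1))ᵀ * G0 (t + 1) * K0 (t + 1))
    -- the true (arbitrary) positive semidefinite terminal cost
    (PN : Matrix (Fin nx) (Fin nx) ℝ) (hPN : PN.PosSemidef)
    (x0 : Fin nx → ℝ)
    -- batch dynamics: final state as a function of the perturbations ū
    (xN : (ℕ → Fin nu → ℝ) → Fin nx → ℝ)
    (hxN : ∀ ub, xN ub =
      prodInterval (fun t => A t + B t * K0 (t + 1)) 0 (N - 1) *ᵥ x0
      + ∑ t ∈ Finset.range N,
          (prodInterval (fun s => A s + B s * K0 (s + 1)) (t + 1) (N - 1) * B t) *ᵥ ub t)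
    -- the condensed objective in ū
    (g : (ℕ → Fin nu → ℝ) → ℝ)
    (hg : ∀ ub, g ub =
      (1 / 2 : ℝ) * ∑ t ∈ Finset.range N, ub t ⬝ᵥ (G0 (t + 1) *ᵥ ub t)
      + (1 / 2 : ℝ) * (xN ub ⬝ᵥ (PN *ᵥ xN ub)))
    -- ū* minimizes the condensed objective
    (ubstar : ℕ → Fin nu → ℝ) (hmin : ∀ ub, g ubstar ≤ g ub)
    -- closed-loop trajectory generated by u_t = K_{0,t+1} x_t + ū*_t
    (x : ℕ → Fin nx → ℝ) (u : ℕ → Fin nu → ℝ)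
    (hx0 : x 0 = x0)
    (hu : ∀ t < N, u t = K0 (t + 1) *ᵥ x t + ubstar t)
    (hdyn : ∀ t < N, x (t + 1) = A t *ᵥ x t + B t *ᵥ u t) :
    -- then (x, u) is optimal for the problem with terminal cost ½ x_Nᵀ P_N x_N
    ∀ (y : ℕ → Fin nx → ℝ) (w : ℕ → Fin nu → ℝ),
      y 0 = x0 →
      (∀ t < N, y (t + 1) = A t *ᵥ y t + B t *ᵥ w t) →
      (1 / 2 : ℝ) * ∑ t ∈ Finset.range N,
          (x t ⬝ᵥ (Qx t *ᵥ x t) + 2 * (x t ⬝ᵥ (Qxu t *ᵥ u t)) + u t ⬝ᵥ (Qu t *ᵥ u t))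
        + (1 / 2 : ℝ) * (x N ⬝ᵥ (PN *ᵥ x N))
      ≤ (1 / 2 : ℝ) * ∑ t ∈ Finset.range N,
          (y t ⬝ᵥ (Qx t *ᵥ y t) + 2 * (y t ⬝ᵥ (Qxu t *ᵥ w t)) + w t ⬝ᵥ (Qu t *ᵥ w t))
        + (1 / 2 : ℝ) * (y N ⬝ᵥ (PN *ᵥ y N)) := by
  intro y w hy0 hwdyn
  rcases Nat.eq_zero_or_pos N with hN0 | hNpos
  · subst hN0
    simp [hx0, hy0]
  -- symmetry of the Riccati matrices
  have hQusym : ∀ t < N, (Qu t)ᵀ = Qu t := by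
    intro t ht
    rw [← Matrix.conjTranspose_eq_transpose_of_trivial]
    exact (hQu t ht).1
  have hQxsym : ∀ t < N, (Qx t)ᵀ = Qx t := by
    intro t ht
    have h := (hQ t ht).1
    rw [Matrix.IsHermitian, Matrix.fromBlocks_conjTranspose] at h
    have h2 := congrArg Matrix.toBlocks₁₁ h
    simpa [Matrix.toBlocks_fromBlocks₁₁,
      Matrix.conjTranspose_eq_transpose_of_trivial] using h2
  have hermP : ∀ k t, t + k = N → (P0 t)ᵀ = P0 t := by
    intro k
    induction k with
    | zero =>
      intro t ht
      have : t = N := by omega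
      rw [this, hPN0, Matrix.transpose_zero]
    | succ k ih =>
      intro t ht
      have htN : t < N := by omega
      have hP1 : (P0 (t + 1))ᵀ = P0 (t + 1) := ih (t + 1) (by omega)
      have hG1 : (G0 (t + 1))ᵀ = G0 (t + 1) := by
        rw [hG0 t htN]
        simp [Matrix.transpose_add, Matrix.transpose_mul, Matrix.transpose_transpose, hP1,
          hQusym t htN, Matrix.mul_assoc]
      rw [hP0 t htN]
      simp [Matrix.transpose_sub, Matrix.transpose_add, Matrix.transpose_mul,
        Matrix.transpose_transpose, hP1, hG1, hQxsym t htN, Matrix.mul_assoc]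
  have hPsym : ∀ t, t ≤ N → (P0 t)ᵀ = P0 t := fun t ht => hermP (N - t) t (by omega)
  have hGsym : ∀ t < N, (G0 (t + 1))ᵀ = G0 (t + 1) := by
    intro t ht
    rw [hG0 t ht]
    simp [Matrix.transpose_add, Matrix.transpose_mul, Matrix.transpose_transpose,
      hPsym (t + 1) (by omega), hQusym t ht, Matrix.mul_assoc]
  -- the cost identity (completion of squares)
  have cost_eq : ∀ (z : ℕ → Fin nx → ℝ) (r : ℕ → Fin nu → ℝ), z 0 = x0 →
      (∀ t < N, z (t + 1) = A t *ᵥ z t + B t *ᵥ r t) →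
      ∑ t ∈ Finset.range N,
          (z t ⬝ᵥ (Qx t *ᵥ z t) + 2 * (z t ⬝ᵥ (Qxu t *ᵥ r t)) + r t ⬝ᵥ (Qu t *ᵥ r t))
        = x0 ⬝ᵥ (P0 0 *ᵥ x0)
          + ∑ t ∈ Finset.range N,
              (r t - K0 (t + 1) *ᵥ z t) ⬝ᵥ (G0 (t + 1) *ᵥ (r t - K0 (t + 1) *ᵥ z t)) := by
    intro z r hz0 hzdyn
    have hterm : ∀ t ∈ Finset.range N,
        (z t ⬝ᵥ (Qx t *ᵥ z t) + 2 * (z t ⬝ᵥ (Qxu t *ᵥ r t)) + r t ⬝ᵥ (Qu t *ᵥ r t))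
          - (r t - K0 (t + 1) *ᵥ z t) ⬝ᵥ (G0 (t + 1) *ᵥ (r t - K0 (t + 1) *ᵥ z t))
        = z t ⬝ᵥ (P0 t *ᵥ z t) - z (t + 1) ⬝ᵥ (P0 (t + 1) *ᵥ z (t + 1)) := by
      intro t ht'
      have ht := Finset.mem_range.1 ht'
      have hqu : Qu t = G0 (t + 1) - (B t)ᵀ * P0 (t + 1) * B t := by
        rw [hG0 t ht, add_sub_cancel_right]
      have h1 : (K0 (t + 1))ᵀ * G0 (t + 1)
          = -(Qxu t + (A t)ᵀ * P0 (t + 1) * B t) := by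
        have h2 := congrArg Matrix.transpose (hK0 t ht)
        rw [Matrix.transpose_mul, hGsym t ht, Matrix.transpose_neg,
          Matrix.transpose_transpose] at h2
        exact h2
      have hqxu : Qxu t = -((K0 (t + 1))ᵀ * G0 (t + 1)) - (A t)ᵀ * P0 (t + 1) * B t := by
        rw [h1]
        abel
      rw [hzdyn t ht]
      exact step_id (A t) (B t) (P0 (t + 1)) (P0 t) (G0 (t + 1)) (K0 (t + 1)) (Qx t) (Qxu t)
        (Qu t) (hPsym (t + 1) (by omega)) (hGsym t ht) hqu hqxu (hP0 t ht) (z t) (r t)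
    have tel : ∑ t ∈ Finset.range N,
        (z t ⬝ᵥ (P0 t *ᵥ z t) - z (t + 1) ⬝ᵥ (P0 (t + 1) *ᵥ z (t + 1)))
        = z 0 ⬝ᵥ (P0 0 *ᵥ z 0) - z N ⬝ᵥ (P0 N *ᵥ z N) :=
      Finset.sum_range_sub' (fun s => z s ⬝ᵥ (P0 s *ᵥ z s)) N
    have hsub : ∑ t ∈ Finset.range N,
          (z t ⬝ᵥ (Qx t *ᵥ z t) + 2 * (z t ⬝ᵥ (Qxu t *ᵥ r t)) + r t ⬝ᵥ (Qu t *ᵥ r t))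
        - ∑ t ∈ Finset.range N,
            (r t - K0 (t + 1) *ᵥ z t) ⬝ᵥ (G0 (t + 1) *ᵥ (r t - K0 (t + 1) *ᵥ z t))
        = z 0 ⬝ᵥ (P0 0 *ᵥ z 0) - z N ⬝ᵥ (P0 N *ᵥ z N) := by
      rw [← Finset.sum_sub_distrib, Finset.sum_congr rfl hterm]
      exact tel
    have hzero : z N ⬝ᵥ (P0 N *ᵥ z N) = 0 := by
      rw [hPN0, Matrix.zero_mulVec, dotProduct_zero]
    rw [hz0] at hsub
    linarith
  -- final state formula
  set M : ℕ → Matrix (Fin nx) (Fin nx) ℝ := fun t => A t + B t * K0 (t + 1) with hM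
  have final_state : ∀ (z : ℕ → Fin nx → ℝ) (r : ℕ → Fin nu → ℝ), z 0 = x0 →
      (∀ t < N, z (t + 1) = A t *ᵥ z t + B t *ᵥ r t) →
      xN (fun t => r t - K0 (t + 1) *ᵥ z t) = z N := by
    intro z r hz0 hzdyn
    have hcl : ∀ t < N, z (t + 1) = M t *ᵥ z t + B t *ᵥ (r t - K0 (t + 1) *ᵥ z t) := by
      intro t ht
      rw [hzdyn t ht, hM]
      simp only [Matrix.add_mulVec, Matrix.mulVec_sub, ← Matrix.mulVec_mulVec]
      abel
    rw [closed_loop M B z _ N hcl, hxN, hz0]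
    have eN : N - 1 + 1 - 0 = N := by omega
    have e0 : prodInterval M 0 (N - 1) = prodDesc M 0 N := by
      unfold prodInterval
      rw [eN]
    rw [e0]
    congr 1
    apply Finset.sum_congr rfl
    intro t ht'
    have ht := Finset.mem_range.1 ht'
    have eT : N - 1 + 1 - (t + 1) = N - 1 - t := by omega
    have e1 : prodInterval M (t + 1) (N - 1) = prodDesc M (t + 1) (N - 1 - t) := by
      unfold prodInterval
      rw [eT]
    rw [e1]
  -- apply to (x,u) and (y,w)
  have hudyn : ∀ t < N, x (t + 1) = A t *ᵥ x t + B t *ᵥ u t := hdyn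
  have hvx : ∀ t < N, u t - K0 (t + 1) *ᵥ x t = ubstar t := by
    intro t ht
    rw [hu t ht]
    abel
  have hxNx : xN (fun t => u t - K0 (t + 1) *ᵥ x t) = x N := final_state x u hx0 hudyn
  have hxNy : xN (fun t => w t - K0 (t + 1) *ᵥ y t) = y N := final_state y w hy0 hwdyn
  have hcx := cost_eq x u hx0 hudyn
  have hcy := cost_eq y w hy0 hwdyn
  -- identify g values
  have hxN_eq : xN (fun t => u t - K0 (t + 1) *ᵥ x t) = xN ubstar := by
    rw [hxN, hxN]
    congr 1
    apply Finset.sum_congr rfl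
    intro t ht'
    rw [hvx t (Finset.mem_range.1 ht')]
  have hg_eq : g (fun t => u t - K0 (t + 1) *ᵥ x t) = g ubstar := by
    rw [hg, hg, hxN_eq]
    congr 2
    apply Finset.sum_congr rfl
    intro t ht'
    rw [hvx t (Finset.mem_range.1 ht')]
  have hgx := hg (fun t => u t - K0 (t + 1) *ᵥ x t)
  have hgy := hg (fun t => w t - K0 (t + 1) *ᵥ y t)
  rw [hxNx] at hgx
  rw [hxNy] at hgy
  have hmin' : g (fun t => u t - K0 (t + 1) *ᵥ x t) ≤ g (fun t => w t - K0 (t + 1) *ᵥ y t) := by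
    rw [hg_eq]
    exact hmin _
  rw [hgx, hgy] at hmin'
  linarith
end

section
/- In the reduced system of Theorem 1, substituting Z = TK̂ where T ∈ ℝ^{n̂×n} has full row rank with U₁T = Sᵀ, the equation (I + Σ(P_N)U₁ᵀQ̄⁻¹U₁)Z = Γ(P_N) with Γ(P_N) = −TP_NÂ transforms, after left-multiplication by Tᵀ(U₁ᵀQ̄⁻¹U₁), into (SQ̄⁻¹Sᵀ + SQ̄⁻¹SᵀP_NSQ̄⁻¹Sᵀ)K̂ = −SQ̄⁻¹SᵀP_NÂ. -/
open Matrix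

theorem reduced_system_transformation {n m nh : ℕ}
    (Qb : Matrix (Fin m) (Fin m) ℝ) (hQb : Qb.PosDef)
    (PN : Matrix (Fin n) (Fin n) ℝ) (hPN : PN.PosSemidef)
    (S : Matrix (Fin n) (Fin m) ℝ) (Ah : Matrix (Fin n) (Fin n) ℝ)
    (U₁ : Matrix (Fin m) (Fin nh) ℝ)
    (Sig : Matrix (Fin nh) (Fin nh) ℝ)
    (hU₁ : U₁ᵀ * U₁ = 1)
    (hU₁range : LinearMap.range U₁.mulVecLin = LinearMap.range (Sᵀ).mulVecLin)
    (hSig : Sᵀ * PN * S = U₁ * Sig * U₁ᵀ)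
    (T : Matrix (Fin nh) (Fin n) ℝ)
    (hTrank : T.rank = nh)  -- T has full row rank
    (hT : U₁ * T = Sᵀ)
    (Kh : Matrix (Fin n) (Fin n) ℝ)
    (Z : Matrix (Fin nh) (Fin n) ℝ) (hZ : Z = T * Kh)
    (hEq : (1 + Sig * U₁ᵀ * Qb⁻¹ * U₁) * Z = -(T * PN * Ah)) :
    (S * Qb⁻¹ * Sᵀ + S * Qb⁻¹ * Sᵀ * PN * S * Qb⁻¹ * Sᵀ) * Kh
      = -(S * Qb⁻¹ * Sᵀ * PN * Ah) := by
  subst hZ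
  have hS : S = Tᵀ * U₁ᵀ := by rw [← transpose_transpose S, ← hT, transpose_mul]
  have hSig' : U₁ * T * PN * (Tᵀ * U₁ᵀ) = U₁ * Sig * U₁ᵀ := by
    rw [hT, ← hS]; exact hSig
  have helper : ∀ (X : Matrix (Fin m) (Fin n) ℝ),
      U₁ * (T * (PN * (Tᵀ * (U₁ᵀ * X)))) = U₁ * (Sig * (U₁ᵀ * X)) := by
    intro X
    calc U₁ * (T * (PN * (Tᵀ * (U₁ᵀ * X)))) = (U₁ * T * PN * (Tᵀ * U₁ᵀ)) * X := by
          simp only [Matrix.mul_assoc]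
      _ = (U₁ * Sig * U₁ᵀ) * X := by rw [hSig']
      _ = U₁ * (Sig * (U₁ᵀ * X)) := by simp only [Matrix.mul_assoc]
  have key := congrArg (fun M => Tᵀ * (U₁ᵀ * Qb⁻¹ * U₁) * M) hEq
  simp only [Matrix.add_mul, Matrix.mul_add, Matrix.one_mul, Matrix.mul_neg, Matrix.mul_assoc] at key
  rw [hS]
  simp only [transpose_mul, transpose_transpose, Matrix.add_mul, Matrix.mul_neg, Matrix.mul_assoc]
  rw [helper]
  exact key
end
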